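/- arXiv:2301.12070 — 2 statements merged into one kernel-verified Lean document; each statement's English description precedes it below -/
import Mathlib

section
/- For every strict finitistic model W and all formulas A, B: (a) A ∧ B is assertible in W iff both A and B are assertible in W; (b) A ∨ B is assertible in W iff A is assertible in W or B is assertible in W; (c) A → B is assertible in W iff A is not assertible in W or B is assertible in W. -/
/-- Propositional formulas over a countably infinite set of variables (indexed by ℕ). -/
inductive Fm : Type
  | bot : Fm
  | var : ℕ → Fm
  | and : Fm → Fm → Fm
  | or : Fm → Fm → Fm
  | imp : Fm → Fm → Fm

/-- ¬A abbreviates A → ⊥. -/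
def Fm.neg (A : Fm) : Fm := Fm.imp A Fm.bot

/-- ¬¬A. -/
def Fm.dneg (A : Fm) : Fm := (Fm.imp A Fm.bot).imp Fm.bot

/-- A strict finitistic model: a rooted tree (a partial order with minimum whose
sets of predecessors are linearly ordered), finitely branching, all of whose
branches (chains) are of at most countable length, with an upward-closed valuation
satisfying the finite verification condition and the atomic prevalence condition. -/
structure SFModel where
  K : Type
  le : K → K → Prop
  le_refl : ∀ k, le k k
  le_antisymm : ∀ k l, le k l → le l k → k = l
  le_trans : ∀ k l m, le k l → le l m → le k m
  root : K
  root_le : ∀ k, le root k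
  pred_linear : ∀ k l m, le l k → le m k → le l m ∨ le m l
  finitely_branching :
    ∀ k, {l | le k l ∧ k ≠ l ∧ ∀ m, le k m → le m l → m = k ∨ m = l}.Finite
  branches_countable :
    ∀ C : Set K, (∀ x ∈ C, ∀ y ∈ C, le x y ∨ le y x) → C.Countable
  val : ℕ → Set K
  val_up : ∀ p k l, le k l → k ∈ val p → l ∈ val p
  fin_verif : ∀ k, {p | k ∈ val p}.Finite
  atomic_prev : ∀ p, (∃ k, k ∈ val p) → ∀ l, ∃ l', le l l' ∧ l' ∈ val p

/-- Strict finitistic forcing at a node of a strict finitistic model. -/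
def Force (W : SFModel) : W.K → Fm → Prop
  | _, Fm.bot => False
  | k, Fm.var p => k ∈ W.val p
  | k, Fm.and A B => Force W k A ∧ Force W k B
  | k, Fm.or A B => Force W k A ∨ Force W k B
  | k, Fm.imp A B =>
      ∀ k', W.le k k' → Force W k' A → ∃ k'', W.le k' k'' ∧ Force W k'' B

/-- A is valid in W: every node forces A. -/
def Valid (W : SFModel) (A : Fm) : Prop := ∀ k, Force W k A

/-- A is assertible in W: some node forces A. -/
def Assertible (W : SFModel) (A : Fm) : Prop := ∃ k, Force W k A

/-- A is prevalent in W: above every node some node forces A. -/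
def Prevalent (W : SFModel) (A : Fm) : Prop := ∀ k, ∃ k', W.le k k' ∧ Force W k' A

lemma force_mono (W : SFModel) (A : Fm) :
    ∀ {k l : W.K}, W.le k l → Force W k A → Force W l A := by
  induction A with
  | bot => intro k l _ h; exact h.elim
  | var p => intro k l hkl h; exact W.val_up p k l hkl h
  | and A B ihA ihB => intro k l hkl h; exact ⟨ihA hkl h.1, ihB hkl h.2⟩
  | or A B ihA ihB =>
      intro k l hkl h
      exact h.elim (fun h => Or.inl (ihA hkl h)) (fun h => Or.inr (ihB hkl h))
  | imp A B ihA ihB =>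
      intro k l hkl h k' hk' hA
      exact h k' (W.le_trans _ _ _ hkl hk') hA

lemma prevalent_of_assertible (W : SFModel) (A : Fm) :
    Assertible W A → Prevalent W A := by
  induction A with
  | bot => rintro ⟨k, hk⟩; exact hk.elim
  | var p => intro h l; exact W.atomic_prev p h l
  | and A B ihA ihB =>
      rintro ⟨k, hA, hB⟩ l
      obtain ⟨l', hll', hl'⟩ := ihA ⟨k, hA⟩ l
      obtain ⟨l'', hl'l'', hl''⟩ := ihB ⟨k, hB⟩ l'
      exact ⟨l'', W.le_trans _ _ _ hll' hl'l'',
        ⟨force_mono W A hl'l'' hl', hl''⟩⟩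
  | or A B ihA ihB =>
      rintro ⟨k, hk⟩ l
      rcases hk with h | h
      · obtain ⟨l', h1, h2⟩ := ihA ⟨k, h⟩ l; exact ⟨l', h1, Or.inl h2⟩
      · obtain ⟨l', h1, h2⟩ := ihB ⟨k, h⟩ l; exact ⟨l', h1, Or.inr h2⟩
  | imp A B ihA ihB =>
      rintro ⟨k, hk⟩ l
      by_cases hA : Assertible W A
      · obtain ⟨k', hkk', hk'A⟩ := ihA hA k
        obtain ⟨k'', _, hk''B⟩ := hk k' hkk' hk'A
        have hBprev := ihB ⟨k'', hk''B⟩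
        refine ⟨l, W.le_refl l, ?_⟩
        intro m _ _
        exact hBprev m
      · refine ⟨l, W.le_refl l, ?_⟩
        intro m _ hmA
        exact absurd ⟨m, hmA⟩ hA

/-- assertibility is calculated classically. -/
theorem assertibility_calculus (W : SFModel) (A B : Fm) :
    (Assertible W (Fm.and A B) ↔ Assertible W A ∧ Assertible W B) ∧
    (Assertible W (Fm.or A B) ↔ Assertible W A ∨ Assertible W B) ∧
    (Assertible W (Fm.imp A B) ↔ ¬ Assertible W A ∨ Assertible W B) := by
  refine ⟨⟨?_, ?_⟩, ⟨?_, ?_⟩, ⟨?_, ?_⟩⟩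
  · rintro ⟨k, hA, hB⟩; exact ⟨⟨k, hA⟩, ⟨k, hB⟩⟩
  · rintro ⟨hA, hB⟩
    obtain ⟨k, hkA⟩ := hA
    obtain ⟨l, hkl, hlB⟩ := prevalent_of_assertible W B hB k
    exact ⟨l, force_mono W A hkl hkA, hlB⟩
  · rintro ⟨k, h | h⟩
    · exact Or.inl ⟨k, h⟩
    · exact Or.inr ⟨k, h⟩
  · rintro (⟨k, h⟩ | ⟨k, h⟩)
    · exact ⟨k, Or.inl h⟩
    · exact ⟨k, Or.inr h⟩
  · rintro ⟨k, hk⟩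
    by_cases hA : Assertible W A
    · obtain ⟨k', hkk', hk'A⟩ := prevalent_of_assertible W A hA k
      obtain ⟨k'', _, hk''B⟩ := hk k' hkk' hk'A
      exact Or.inr ⟨k'', hk''B⟩
    · exact Or.inl hA
  · rintro (hA | hB)
    · exact ⟨W.root, fun m _ hmA => absurd ⟨m, hmA⟩ hA⟩
    · refine ⟨W.root, fun m _ _ => prevalent_of_assertible W B hB m⟩
end

section
/- Fix the two-node frame F = ({r, k}, ≤) with r < k. If a formula A is a classical tautology and A is stable in every strict finitistic valuation on F (i.e., for every strict finitistic valuation v on F, every node of (F, v) forcing ¬¬A also forces A), then ⊢_SF A (the sequent with empty antecedent and A as succedent is derivable in SF). -/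
/-- Classical Boolean evaluation of a formula under a Boolean valuation of the
variables, with ⊥ evaluated as false. -/
def clEval (u : ℕ → Bool) : Fm → Bool
  | Fm.bot => false
  | Fm.var p => u p
  | Fm.and A B => clEval u A && clEval u B
  | Fm.or A B => clEval u A || clEval u B
  | Fm.imp A B => !(clEval u A) || clEval u B

/-- The order of the two-node frame {r, k} with r < k, where `false` is the root r
and `true` is the top node k. -/
def le2 (x y : Bool) : Prop := x = y ∨ (x = false ∧ y = true)

/-- Strict finitistic forcing on the two-node frame, where the valuation is given
by `a p` (the root r = `false` forces p) and `b p` (the top k = `true` forces p). -/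
def Force2 (a b : ℕ → Prop) : Bool → Fm → Prop
  | _, Fm.bot => False
  | false, Fm.var p => a p
  | true, Fm.var p => b p
  | x, Fm.and A B => Force2 a b x A ∧ Force2 a b x B
  | x, Fm.or A B => Force2 a b x A ∨ Force2 a b x B
  | x, Fm.imp A B =>
      ∀ y, le2 x y → Force2 a b y A → ∃ z, le2 y z ∧ Force2 a b z B

/-- The sequent calculus SF on sequents of finite sequences (lists) of formulas:
initial sequents ⊥ ⊢ and p ⊢ p, the structural rules of LK (weakening,
contraction, exchange and cut on both sides), and the logical rules of SF. -/
inductive SFDeriv : List Fm → List Fm → Prop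
  | botL : SFDeriv [Fm.bot] []
  | ax (p : ℕ) : SFDeriv [Fm.var p] [Fm.var p]
  | wkL (A : Fm) (Γ Δ : List Fm) : SFDeriv Γ Δ → SFDeriv (A :: Γ) Δ
  | wkR (A : Fm) (Γ Δ : List Fm) : SFDeriv Γ Δ → SFDeriv Γ (Δ ++ [A])
  | ctrL (A : Fm) (Γ Δ : List Fm) : SFDeriv (A :: A :: Γ) Δ → SFDeriv (A :: Γ) Δ
  | ctrR (A : Fm) (Γ Δ : List Fm) : SFDeriv Γ (Δ ++ [A, A]) → SFDeriv Γ (Δ ++ [A])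
  | exch (Γ Γ' Δ Δ' : List Fm) :
      SFDeriv Γ Δ → Γ.Perm Γ' → Δ.Perm Δ' → SFDeriv Γ' Δ'
  | cut (A : Fm) (Γ Δ Pi Sg : List Fm) :
      SFDeriv Γ (Δ ++ [A]) → SFDeriv (A :: Pi) Sg → SFDeriv (Γ ++ Pi) (Δ ++ Sg)
  | andL1 (A B : Fm) (Γ Δ : List Fm) :
      SFDeriv (A :: Γ) Δ → SFDeriv (Fm.and B A :: Γ) Δ
  | andL2 (A B : Fm) (Γ Δ : List Fm) :
      SFDeriv (A :: Γ) Δ → SFDeriv (Fm.and A B :: Γ) Δ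
  | andR (A B : Fm) (Γ Δ : List Fm) :
      SFDeriv Γ (Δ ++ [A]) → SFDeriv Γ (Δ ++ [B]) → SFDeriv Γ (Δ ++ [Fm.and A B])
  | orL (A B : Fm) (Γ Δ : List Fm) :
      SFDeriv (A :: Γ) Δ → SFDeriv (B :: Γ) Δ → SFDeriv (Fm.or A B :: Γ) Δ
  | orR1 (A B : Fm) (Γ Δ : List Fm) :
      SFDeriv Γ (Δ ++ [A]) → SFDeriv Γ (Δ ++ [Fm.or A B])
  | orR2 (A B : Fm) (Γ Δ : List Fm) :
      SFDeriv Γ (Δ ++ [A]) → SFDeriv Γ (Δ ++ [Fm.or B A])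
  | impL (A B : Fm) (Γ Δ Pi Sg : List Fm) :
      SFDeriv Γ (Δ ++ [A]) → SFDeriv (B :: Pi) Sg →
      SFDeriv (Γ ++ Fm.imp A B :: Pi) (Δ ++ Sg.map Fm.dneg)
  | impR (A B : Fm) (Γ Δ : List Fm) :
      SFDeriv (Γ ++ [A]) (Fm.dneg B :: Δ) →
      SFDeriv Γ (Fm.imp A B :: Δ.map Fm.dneg)


/-! ### Auxiliary definitions and semantic lemmas -/

/-- The variables occurring in a formula. -/
def Fm.vars : Fm → Finset ℕ
  | Fm.bot => ∅
  | Fm.var p => {p}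
  | Fm.and A B => A.vars ∪ B.vars
  | Fm.or A B => A.vars ∪ B.vars
  | Fm.imp A B => A.vars ∪ B.vars

/-- Evaluation at the root of the two-node model whose top node is described by
the Boolean valuation `u` and whose root forces no variables. -/
def eEval (u : ℕ → Bool) : Fm → Bool
  | Fm.bot => false
  | Fm.var _ => false
  | Fm.and A B => eEval u A && eEval u B
  | Fm.or A B => eEval u A || eEval u B
  | Fm.imp A B => !(clEval u A) || clEval u B

lemma eEval_le_clEval (u : ℕ → Bool) : ∀ C : Fm, eEval u C = true → clEval u C = true := by
  intro C
  induction C with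
  | bot => simp [eEval, clEval]
  | var p => simp [eEval]
  | and A B ihA ihB => simp [eEval, clEval]; tauto
  | or A B ihA ihB => simp [eEval, clEval]; tauto
  | imp A B ihA ihB => simp [eEval, clEval]

lemma eval_agree (u u' : ℕ → Bool) : ∀ C : Fm, (∀ p ∈ C.vars, u p = u' p) →
    clEval u C = clEval u' C ∧ eEval u C = eEval u' C := by
  intro C
  induction C with
  | bot => intro _; exact ⟨rfl, rfl⟩
  | var p => intro h; exact ⟨h p (by simp [Fm.vars]), rfl⟩
  | and A B ihA ihB =>
      intro h
      have hA := ihA (fun p hp => h p (by simp [Fm.vars]; exact Or.inl hp))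
      have hB := ihB (fun p hp => h p (by simp [Fm.vars]; exact Or.inr hp))
      simp [clEval, eEval, hA.1, hA.2, hB.1, hB.2]
  | or A B ihA ihB =>
      intro h
      have hA := ihA (fun p hp => h p (by simp [Fm.vars]; exact Or.inl hp))
      have hB := ihB (fun p hp => h p (by simp [Fm.vars]; exact Or.inr hp))
      simp [clEval, eEval, hA.1, hA.2, hB.1, hB.2]
  | imp A B ihA ihB =>
      intro h
      have hA := ihA (fun p hp => h p (by simp [Fm.vars]; exact Or.inl hp))
      have hB := ihB (fun p hp => h p (by simp [Fm.vars]; exact Or.inr hp))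
      simp [clEval, eEval, hA.1, hB.1]

lemma le2_true (x : Bool) : le2 x true := by cases x <;> simp [le2]
lemma le2_from_true {y : Bool} (h : le2 true y) : y = true := by
  rcases h with h | h
  · exact h.symm
  · exact absurd h.1 (by simp)

/-- Forcing on the two-node model with empty root valuation:
top node is classical evaluation, root is `eEval`. -/
lemma force_iff (v : ℕ → Bool) : ∀ C : Fm,
    (Force2 (fun _ => False) (fun p => v p = true) true C ↔ clEval v C = true) ∧
    (Force2 (fun _ => False) (fun p => v p = true) false C ↔ eEval v C = true) := by
  intro C
  induction C with
  | bot => simp [Force2, clEval, eEval]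
  | var p => simp [Force2, clEval, eEval]
  | and A B ihA ihB =>
      constructor
      · show (Force2 _ _ true A ∧ Force2 _ _ true B) ↔ _
        simp [clEval, ihA.1, ihB.1]
      · show (Force2 _ _ false A ∧ Force2 _ _ false B) ↔ _
        simp [eEval, ihA.2, ihB.2]
  | or A B ihA ihB =>
      constructor
      · show (Force2 _ _ true A ∨ Force2 _ _ true B) ↔ _
        simp [clEval, ihA.1, ihB.1]
      · show (Force2 _ _ false A ∨ Force2 _ _ false B) ↔ _
        simp [eEval, ihA.2, ihB.2]
  | imp A B ihA ihB =>
      have himp : ∀ x : Bool, Force2 (fun _ => False) (fun p => v p = true) x (Fm.imp A B) ↔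
          (∀ y, le2 x y → Force2 (fun _ => False) (fun p => v p = true) y A →
            ∃ z, le2 y z ∧ Force2 (fun _ => False) (fun p => v p = true) z B) := by
        intro x; cases x <;> rfl
      constructor
      · rw [himp]
        constructor
        · intro h
          have hcl : clEval v A = true → clEval v B = true := by
            intro hA
            obtain ⟨z, hz, hB⟩ := h true (le2_true true) (ihA.1.mpr hA)
            have := le2_from_true hz
            subst this
            exact ihB.1.mp hB
          cases hA : clEval v A <;> cases hB : clEval v B <;> simp_all [clEval]
        · intro h y hy hA
          have hy' := le2_from_true hy; subst hy'
          refine ⟨true, le2_true true, ?_⟩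
          apply ihB.1.mpr
          have hA' := ihA.1.mp hA
          simp [clEval] at h
          cases hcA : clEval v A <;> simp_all
      · rw [himp]
        constructor
        · intro h
          have hcl : clEval v A = true → clEval v B = true := by
            intro hA
            obtain ⟨z, hz, hB⟩ := h true (le2_true false) (ihA.1.mpr hA)
            have := le2_from_true hz
            subst this
            exact ihB.1.mp hB
          cases hA : clEval v A <;> cases hB : clEval v B <;> simp_all [eEval]
        · intro h y hy hA
          refine ⟨true, le2_true y, ?_⟩
          apply ihB.1.mpr
          have hcA : clEval v A = true := by
            cases y with
            | false =>
                exact eEval_le_clEval v A (ihA.2.mp hA)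
            | true => exact ihA.1.mp hA
          simp [eEval] at h
          cases h2 : clEval v A <;> simp_all

/-- The semantic hypotheses boil down to: `A` evaluates to true at the root of
every (finitely supported) two-node model with empty root valuation; and by
agreement, at every two-node model with empty root valuation. -/
lemma sem_key (A : Fm)
    (htaut : ∀ u : ℕ → Bool, clEval u A = true)
    (hstable : ∀ a b : ℕ → Prop,
      (∀ p, a p → b p) →
      (∀ p, (a p ∨ b p) → b p) →
      {p | a p}.Finite → {p | b p}.Finite →
      ∀ x : Bool, Force2 a b x (Fm.dneg A) → Force2 a b x A) :
    ∀ u : ℕ → Bool, eEval u A = true := by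
  intro u
  set v : ℕ → Bool := fun p => u p && decide (p ∈ A.vars) with hv
  have hagree : ∀ p ∈ A.vars, u p = v p := by
    intro p hp; simp [hv, hp]
  have hbfin : {p | v p = true}.Finite := by
    apply Set.Finite.subset A.vars.finite_toSet
    intro p hp
    simp [hv] at hp
    exact hp.2
  have hafin : {p : ℕ | False}.Finite := by simp
  have hst := hstable (fun _ => False) (fun p => v p = true)
    (fun p h => h.elim) (fun p h => h.resolve_left id) hafin hbfin false
  have hdneg : Force2 (fun _ => False) (fun p => v p = true) false (Fm.dneg A) := by
    apply (force_iff v (Fm.dneg A)).2.mpr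
    have : clEval v A = true := htaut v
    simp [Fm.dneg, eEval, clEval, this]
  have hA : eEval v A = true := (force_iff v A).2.mp (hst hdneg)
  rw [(eval_agree u v A hagree).2]
  exact hA

/-! ### Structural helper lemmas for SF -/

deriving instance DecidableEq for Fm

lemma SF.exchL {Γ Γ' Δ : List Fm} (h : SFDeriv Γ Δ) (hp : Γ.Perm Γ') : SFDeriv Γ' Δ :=
  SFDeriv.exch Γ Γ' Δ Δ h hp (List.Perm.refl Δ)

lemma SF.exchR {Γ Δ Δ' : List Fm} (h : SFDeriv Γ Δ) (hp : Δ.Perm Δ') : SFDeriv Γ Δ' :=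
  SFDeriv.exch Γ Γ Δ Δ' h (List.Perm.refl Γ) hp

lemma SF.wkL_many (Ξ : List Fm) {Γ Δ : List Fm} (h : SFDeriv Γ Δ) : SFDeriv (Ξ ++ Γ) Δ := by
  induction Ξ with
  | nil => exact h
  | cons X Ξ ih => exact SFDeriv.wkL X _ _ ih

lemma SF.wk_all {Δ : List Fm} (Γ : List Fm) (h : SFDeriv [] Δ) : SFDeriv Γ Δ := by
  simpa using SF.wkL_many Γ h

lemma SF.of_mem {X : Fm} {Γ Δ : List Fm} (h : SFDeriv [X] Δ) (hm : X ∈ Γ) : SFDeriv Γ Δ := by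
  have h1 : SFDeriv (Γ.erase X ++ [X]) Δ := SF.wkL_many (Γ.erase X) h
  exact SF.exchL h1 ((List.perm_append_comm).trans (List.perm_cons_erase hm).symm)

lemma SF.ctr_pref : ∀ (Γ : List Fm) {Θ Δ : List Fm},
    SFDeriv (Γ ++ Γ ++ Θ) Δ → SFDeriv (Γ ++ Θ) Δ := by
  intro Γ
  induction Γ with
  | nil => intro Θ Δ h; exact h
  | cons X Γ ih =>
      intro Θ Δ h
      have e1 : (X :: Γ) ++ (X :: Γ) ++ Θ = X :: (Γ ++ X :: (Γ ++ Θ)) := by simp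
      rw [e1] at h
      have h2 : SFDeriv (X :: X :: (Γ ++ (Γ ++ Θ))) Δ :=
        SF.exchL h (List.Perm.cons X List.perm_middle)
      have h3 : SFDeriv (X :: (Γ ++ (Γ ++ Θ))) Δ := SFDeriv.ctrL X _ _ h2
      have h4 : SFDeriv (Γ ++ Γ ++ (X :: Θ)) Δ := by
        apply SF.exchL h3
        have := (List.perm_middle (a := X) (l₁ := Γ ++ Γ) (l₂ := Θ)).symm
        simpa [List.append_assoc] using this
      have h5 := ih h4
      apply SF.exchL h5
      exact List.perm_middle

/-- Contraction of a full duplicate context. -/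
lemma SF.ctr_all {Γ Δ : List Fm} (h : SFDeriv (Γ ++ Γ) Δ) : SFDeriv Γ Δ := by
  have h1 : SFDeriv (Γ ++ Γ ++ []) Δ := by simpa using h
  simpa using SF.ctr_pref Γ h1

/-! ### Identity, negation rules, cuts -/

lemma SF.idd : ∀ A : Fm, SFDeriv [A] [A] := by
  intro A
  induction A with
  | bot =>
      have := SFDeriv.wkR Fm.bot [Fm.bot] [] SFDeriv.botL
      simpa using this
  | var p => exact SFDeriv.ax p
  | and A B ihA ihB =>
      have hA : SFDeriv [Fm.and A B] [A] := SFDeriv.andL2 A B [] [A] ihA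
      have hB : SFDeriv [Fm.and A B] [B] := SFDeriv.andL1 B A [] [B] ihB
      have := SFDeriv.andR A B [Fm.and A B] [] (by simpa using hA) (by simpa using hB)
      simpa using this
  | or A B ihA ihB =>
      have hA : SFDeriv [A] [Fm.or A B] := by simpa using SFDeriv.orR1 A B [A] [] (by simpa using ihA)
      have hB : SFDeriv [B] [Fm.or A B] := by simpa using SFDeriv.orR2 B A [B] [] (by simpa using ihB)
      exact SFDeriv.orL A B [] [Fm.or A B] hA hB
  | imp A B ihA ihB =>
      have h1 : SFDeriv ([A] ++ Fm.imp A B :: []) ([] ++ [B].map Fm.dneg) :=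
        SFDeriv.impL A B [A] [] [] [B] (by simpa using ihA) ihB
      have h2 : SFDeriv [A, Fm.imp A B] [Fm.dneg B] := by simpa using h1
      have h3 : SFDeriv ([Fm.imp A B] ++ [A]) (Fm.dneg B :: []) := by
        apply SF.exchL h2
        exact List.Perm.swap _ _ _
      have := SFDeriv.impR A B [Fm.imp A B] [] h3
      simpa using this

/-- Right negation introduction (empty succedent). -/
lemma SF.negR {Γ : List Fm} {A : Fm} (h : SFDeriv (Γ ++ [A]) []) : SFDeriv Γ [A.neg] := by
  have h1 : SFDeriv (Γ ++ [A]) ([] ++ [Fm.dneg Fm.bot]) := SFDeriv.wkR _ _ _ h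
  have h2 : SFDeriv (Γ ++ [A]) (Fm.dneg Fm.bot :: []) := by simpa using h1
  have := SFDeriv.impR A Fm.bot Γ [] h2
  simpa [Fm.neg] using this

/-- Left negation introduction (singleton succedent). -/
lemma SF.negL {Γ : List Fm} {A : Fm} (h : SFDeriv Γ [A]) : SFDeriv (Γ ++ [A.neg]) [] := by
  have := SFDeriv.impL A Fm.bot Γ [] [] [] (by simpa using h) SFDeriv.botL
  simpa [Fm.neg] using this

/-- Cut with singleton cut formula and empty left succedent context. -/
lemma SF.cut1 {Γ Θ S : List Fm} {A : Fm} (h1 : SFDeriv Γ [A]) (h2 : SFDeriv (A :: Θ) S) :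
    SFDeriv (Γ ++ Θ) S := by
  have := SFDeriv.cut A Γ [] Θ S (by simpa using h1) h2
  simpa using this

lemma SF.cutS {Γ S : List Fm} {A : Fm} (h1 : SFDeriv Γ [A]) (h2 : SFDeriv [A] S) :
    SFDeriv Γ S := by
  have := SF.cut1 h1 h2
  simpa using this

/-- Cut two antecedent formulas simultaneously into the same context. -/
lemma SF.cut2 {Γ : List Fm} {A B X : Fm} (h1 : SFDeriv Γ [A]) (h2 : SFDeriv Γ [B])
    (h3 : SFDeriv [A, B] [X]) : SFDeriv Γ [X] := by
  have s1 : SFDeriv (Γ ++ [B]) [X] := SF.cut1 h1 h3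
  have s2 : SFDeriv (B :: Γ) [X] := SF.exchL s1 (List.perm_append_comm)
  have s3 : SFDeriv (Γ ++ Γ) [X] := SF.cut1 h2 s2
  exact SF.ctr_all s3

/-- Double negation introduction. -/
lemma SF.dni (A : Fm) : SFDeriv [A] [A.dneg] := by
  have h1 : SFDeriv ([A] ++ [A.neg]) [] := SF.negL (SF.idd A)
  have h2 : SFDeriv [A] [A.neg.neg] := SF.negR h1
  simpa [Fm.neg, Fm.dneg] using h2

lemma SF.dneg_neg (A : Fm) : A.neg.neg = A.dneg := rfl

/-! ### Head-position manipulation helpers -/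

lemma SF.swap01 {a b : Fm} {Γ Δ : List Fm} (h : SFDeriv (a :: b :: Γ) Δ) :
    SFDeriv (b :: a :: Γ) Δ := SF.exchL h (List.Perm.swap b a Γ)

lemma SF.swap12 {a b c : Fm} {Γ Δ : List Fm} (h : SFDeriv (a :: b :: c :: Γ) Δ) :
    SFDeriv (a :: c :: b :: Γ) Δ := SF.exchL h (List.Perm.cons a (List.Perm.swap c b Γ))

/-- `negL` in cons form. -/
lemma SF.negL' {Γ : List Fm} {A : Fm} (h : SFDeriv Γ [A]) : SFDeriv (A.neg :: Γ) [] := by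
  have h1 := SF.negL h
  simpa using SF.exchL h1 (List.perm_append_comm)

/-- `negR` in cons form. -/
lemma SF.negR' {Γ : List Fm} {A : Fm} (h : SFDeriv (A :: Γ) []) : SFDeriv Γ [A.neg] := by
  apply SF.negR
  exact SF.exchL h (List.perm_append_comm (l₁ := [A]) (l₂ := Γ))

/-! ### Logical lemmas for the truth lemma -/

lemma SF.dneg_and (A B : Fm) : SFDeriv [A.dneg, B.dneg] [(A.and B).dneg] := by
  have s1 : SFDeriv [A, B] [A] := SF.swap01 (SFDeriv.wkL B [A] [A] (SF.idd A))
  have s2 : SFDeriv [A, B] [B] := SFDeriv.wkL A [B] [B] (SF.idd B)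
  have s3 : SFDeriv [A, B] [Fm.and A B] := by
    simpa using SFDeriv.andR A B [A, B] [] (by simpa using s1) (by simpa using s2)
  have s4 : SFDeriv [(A.and B).neg, A, B] [] := SF.negL' s3
  have s5 : SFDeriv [B, (A.and B).neg, A] [] := SF.swap01 (SF.swap12 s4)
  have s6 : SFDeriv [(A.and B).neg, A] [B.neg] := SF.negR' s5
  have s7 : SFDeriv [B.neg.neg, (A.and B).neg, A] [] := SF.negL' s6
  have s8 : SFDeriv [A, B.neg.neg, (A.and B).neg] [] := SF.swap01 (SF.swap12 s7)
  have s9 : SFDeriv [B.neg.neg, (A.and B).neg] [A.neg] := SF.negR' s8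
  have s10 : SFDeriv [A.neg.neg, B.neg.neg, (A.and B).neg] [] := SF.negL' s9
  have s11 : SFDeriv [(A.and B).neg, A.neg.neg, B.neg.neg] [] := SF.swap01 (SF.swap12 s10)
  have s12 : SFDeriv [A.neg.neg, B.neg.neg] [(A.and B).neg.neg] := SF.negR' s11
  simpa [SF.dneg_neg] using s12

lemma SF.neg_and1 (A B : Fm) : SFDeriv [A.neg] [(A.and B).neg] := by
  have s1 : SFDeriv [Fm.and A B] [A] := SFDeriv.andL2 A B [] [A] (SF.idd A)
  have s2 : SFDeriv [A.neg, Fm.and A B] [] := SF.negL' s1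
  have s3 : SFDeriv [Fm.and A B, A.neg] [] := SF.swap01 s2
  exact SF.negR' s3

lemma SF.neg_and2 (A B : Fm) : SFDeriv [B.neg] [(A.and B).neg] := by
  have s1 : SFDeriv [Fm.and A B] [B] := SFDeriv.andL1 B A [] [B] (SF.idd B)
  have s2 : SFDeriv [B.neg, Fm.and A B] [] := SF.negL' s1
  have s3 : SFDeriv [Fm.and A B, B.neg] [] := SF.swap01 s2
  exact SF.negR' s3

lemma SF.dneg_or1 (A B : Fm) : SFDeriv [A.dneg] [(A.or B).dneg] := by
  have s1 : SFDeriv [A] [Fm.or A B] := by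
    simpa using SFDeriv.orR1 A B [A] [] (by simpa using SF.idd A)
  have s2 : SFDeriv [(A.or B).neg, A] [] := SF.negL' s1
  have s3 : SFDeriv [(A.or B).neg] [A.neg] := SF.negR' (SF.swap01 s2)
  have s4 : SFDeriv [A.neg.neg, (A.or B).neg] [] := SF.negL' s3
  have s5 : SFDeriv [A.neg.neg] [(A.or B).neg.neg] := SF.negR' (SF.swap01 s4)
  simpa [SF.dneg_neg] using s5

lemma SF.dneg_or2 (A B : Fm) : SFDeriv [B.dneg] [(A.or B).dneg] := by
  have s1 : SFDeriv [B] [Fm.or A B] := by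
    simpa using SFDeriv.orR2 B A [B] [] (by simpa using SF.idd B)
  have s2 : SFDeriv [(A.or B).neg, B] [] := SF.negL' s1
  have s3 : SFDeriv [(A.or B).neg] [B.neg] := SF.negR' (SF.swap01 s2)
  have s4 : SFDeriv [B.neg.neg, (A.or B).neg] [] := SF.negL' s3
  have s5 : SFDeriv [B.neg.neg] [(A.or B).neg.neg] := SF.negR' (SF.swap01 s4)
  simpa [SF.dneg_neg] using s5

lemma SF.neg_or (A B : Fm) : SFDeriv [A.neg, B.neg] [(A.or B).neg] := by
  have tA : SFDeriv [A, A.neg, B.neg] [] := by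
    have h1 : SFDeriv [A.neg, A] [] := SF.negL' (SF.idd A)
    have h2 : SFDeriv [B.neg, A.neg, A] [] := SFDeriv.wkL _ _ _ h1
    exact SF.swap12 (SF.swap01 (SF.swap12 h2))
  have tB : SFDeriv [B, A.neg, B.neg] [] := by
    have h1 : SFDeriv [B.neg, B] [] := SF.negL' (SF.idd B)
    have h2 : SFDeriv [A.neg, B.neg, B] [] := SFDeriv.wkL _ _ _ h1
    exact SF.swap12 (SF.swap01 (SF.swap12 (SF.swap01 h2)))
  have h3 : SFDeriv [Fm.or A B, A.neg, B.neg] [] := SFDeriv.orL A B [A.neg, B.neg] [] tA tB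
  exact SF.negR' h3

lemma SF.imp_refut (A B : Fm) : SFDeriv [A.dneg, B.neg] [(A.imp B).neg] := by
  have u1 : SFDeriv [A, Fm.imp A B] [B.dneg] := by
    simpa using SFDeriv.impL A B [A] [] [] [B] (by simpa using SF.idd A) (SF.idd B)
  have u2 : SFDeriv (B.dneg :: [B.neg]) [] := by
    simpa [SF.dneg_neg] using SF.negL' (SF.idd B.neg)
  have u3 : SFDeriv ([A, Fm.imp A B] ++ [B.neg]) [] := SF.cut1 u1 u2
  have u3' : SFDeriv [A, Fm.imp A B, B.neg] [] := by simpa using u3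
  have u4 : SFDeriv [Fm.imp A B, B.neg] [A.neg] := SF.negR' u3'
  have u5 : SFDeriv [A.neg.neg, Fm.imp A B, B.neg] [] := SF.negL' u4
  have u6 : SFDeriv [Fm.imp A B, A.neg.neg, B.neg] [] := SF.swap01 u5
  have u7 : SFDeriv [A.neg.neg, B.neg] [(Fm.imp A B).neg] := SF.negR' u6
  simpa [SF.dneg_neg] using u7

lemma SF.imp_from_negA (A B : Fm) : SFDeriv [A.neg] [A.imp B] := by
  have w1 : SFDeriv [A.neg, A] [] := SF.negL' (SF.idd A)
  have w2 : SFDeriv ([A.neg] ++ [A]) ([] ++ [Fm.dneg B]) := SFDeriv.wkR _ _ _ (by simpa using w1)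
  have := SFDeriv.impR A B [A.neg] [] (by simpa using w2)
  simpa using this

lemma SF.imp_from_dnegB (A B : Fm) : SFDeriv [B.dneg] [A.imp B] := by
  have w1 : SFDeriv [B.dneg, A] [B.dneg] := SF.swap01 (SFDeriv.wkL A _ _ (SF.idd B.dneg))
  have := SFDeriv.impR A B [B.dneg] [] (by simpa using w1)
  simpa using this

/-- The weak excluded middle sequent `⊢ ¬A, ¬¬A`. -/
lemma SF.weak_lem (A : Fm) : SFDeriv [] [A.neg, A.dneg] := by
  have h1 : SFDeriv [A] ([A] ++ [Fm.dneg Fm.bot]) := SFDeriv.wkR _ _ _ (SF.idd A)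
  have h2 : SFDeriv ([] ++ [A]) (Fm.dneg Fm.bot :: [A]) :=
    SF.exchR (by simpa using h1) (List.Perm.swap _ _ _)
  have := SFDeriv.impR A Fm.bot [] [A] h2
  simpa [Fm.neg, Fm.dneg] using this

/-- Case elimination on the three possible states of a formula. -/
lemma SF.elim_fm (X : Fm) {Γ : List Fm} {D : Fm}
    (h1 : SFDeriv (X.dneg :: Γ) [D]) (h2 : SFDeriv (X.neg :: Γ) [D]) : SFDeriv Γ [D] := by
  have c1 : SFDeriv ([] ++ Γ) ([X.neg] ++ [D]) :=
    SFDeriv.cut X.dneg [] [X.neg] Γ [D] (by simpa using SF.weak_lem X) h1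
  have c2 : SFDeriv Γ ([D] ++ [X.neg]) := SF.exchR (by simpa using c1) (List.Perm.swap _ _ _)
  have c3 : SFDeriv (Γ ++ Γ) ([D] ++ [D]) := SFDeriv.cut X.neg Γ [D] Γ [D] c2 h2
  have c4 : SFDeriv (Γ ++ Γ) ([] ++ [D]) := SFDeriv.ctrR D (Γ ++ Γ) [] (by simpa using c3)
  exact SF.ctr_all (by simpa using c4)

/-! ### The truth lemma and variable elimination -/

/-- The state-description formula for a variable: `¬¬p` if `u p`, `¬p` otherwise. -/
def sp (u : ℕ → Bool) (p : ℕ) : Fm :=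
  if u p = true then (Fm.var p).dneg else (Fm.var p).neg

lemma SF.truth (u : ℕ → Bool) (L : List ℕ) : ∀ C : Fm, (∀ p ∈ C.vars, p ∈ L) →
    (clEval u C = true → SFDeriv (L.map (sp u)) [C.dneg]) ∧
    (clEval u C = false → SFDeriv (L.map (sp u)) [C.neg]) ∧
    (eEval u C = true → SFDeriv (L.map (sp u)) [C]) := by
  intro C
  induction C with
  | bot =>
      intro _
      refine ⟨?_, ?_, ?_⟩
      · intro h; simp [clEval] at h
      · intro _
        have h0 : SFDeriv ([] ++ [Fm.bot]) [] := by simpa using SFDeriv.botL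
        exact SF.wk_all _ (SF.negR h0)
      · intro h; simp [eEval] at h
  | var p =>
      intro hsub
      have hmem : sp u p ∈ L.map (sp u) :=
        List.mem_map_of_mem (hsub p (by simp [Fm.vars]))
      refine ⟨?_, ?_, ?_⟩
      · intro h
        have h' : u p = true := by simpa [clEval] using h
        have : sp u p = (Fm.var p).dneg := by simp [sp, h']
        exact SF.of_mem (SF.idd _) (this ▸ hmem)
      · intro h
        have h' : u p = false := by simpa [clEval] using h
        have : sp u p = (Fm.var p).neg := by simp [sp, h']
        exact SF.of_mem (SF.idd _) (this ▸ hmem)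
      · intro h; simp [eEval] at h
  | and A B ihA ihB =>
      intro hsub
      have ihA' := ihA (fun p hp => hsub p (by simp [Fm.vars]; exact Or.inl hp))
      have ihB' := ihB (fun p hp => hsub p (by simp [Fm.vars]; exact Or.inr hp))
      refine ⟨?_, ?_, ?_⟩
      · intro h
        simp [clEval] at h
        exact SF.cut2 (ihA'.1 h.1) (ihB'.1 h.2) (SF.dneg_and A B)
      · intro h
        cases hA : clEval u A with
        | false => exact SF.cutS (ihA'.2.1 hA) (SF.neg_and1 A B)
        | true =>
            have hB : clEval u B = false := by simpa [clEval, hA] using h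
            exact SF.cutS (ihB'.2.1 hB) (SF.neg_and2 A B)
      · intro h
        simp [eEval] at h
        have := SFDeriv.andR A B (L.map (sp u)) []
          (by simpa using ihA'.2.2 h.1) (by simpa using ihB'.2.2 h.2)
        simpa using this
  | or A B ihA ihB =>
      intro hsub
      have ihA' := ihA (fun p hp => hsub p (by simp [Fm.vars]; exact Or.inl hp))
      have ihB' := ihB (fun p hp => hsub p (by simp [Fm.vars]; exact Or.inr hp))
      refine ⟨?_, ?_, ?_⟩
      · intro h
        simp [clEval] at h
        rcases h with h | h
        · exact SF.cutS (ihA'.1 h) (SF.dneg_or1 A B)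
        · exact SF.cutS (ihB'.1 h) (SF.dneg_or2 A B)
      · intro h
        simp [clEval] at h
        exact SF.cut2 (ihA'.2.1 h.1) (ihB'.2.1 h.2) (SF.neg_or A B)
      · intro h
        simp [eEval] at h
        rcases h with h | h
        · simpa using SFDeriv.orR1 A B (L.map (sp u)) [] (by simpa using ihA'.2.2 h)
        · simpa using SFDeriv.orR2 B A (L.map (sp u)) [] (by simpa using ihB'.2.2 h)
  | imp A B ihA ihB =>
      intro hsub
      have ihA' := ihA (fun p hp => hsub p (by simp [Fm.vars]; exact Or.inl hp))
      have ihB' := ihB (fun p hp => hsub p (by simp [Fm.vars]; exact Or.inr hp))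
      have main : (!(clEval u A) || clEval u B) = true → SFDeriv (L.map (sp u)) [A.imp B] := by
        intro h
        cases hA : clEval u A with
        | false => exact SF.cutS (ihA'.2.1 hA) (SF.imp_from_negA A B)
        | true =>
            rw [hA] at h; simp at h
            exact SF.cutS (ihB'.1 h) (SF.imp_from_dnegB A B)
      refine ⟨?_, ?_, ?_⟩
      · intro h
        have h' : (!(clEval u A) || clEval u B) = true := by simpa [clEval] using h
        exact SF.cutS (main h') (SF.dni (A.imp B))
      · intro h
        simp [clEval] at h
        exact SF.cut2 (ihA'.1 h.1) (ihB'.2.1 h.2) (SF.imp_refut A B)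
      · intro h
        have h' : (!(clEval u A) || clEval u B) = true := by simpa [eEval] using h
        exact main h'

lemma SF.elim (D : Fm) : ∀ L : List ℕ, L.Nodup →
    (∀ u : ℕ → Bool, SFDeriv (L.map (sp u)) [D]) → SFDeriv [] [D] := by
  intro L
  induction L with
  | nil => intro _ h; simpa using h (fun _ => false)
  | cons p L ih =>
      intro hnd h
      have hpL : p ∉ L := by simp [List.nodup_cons] at hnd; exact hnd.1
      apply ih (by simp [List.nodup_cons] at hnd; exact hnd.2)
      intro u
      have key : ∀ (c : Bool), L.map (sp (Function.update u p c)) = L.map (sp u) := by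
        intro c
        apply List.map_congr_left
        intro q hq
        have hqp : q ≠ p := fun e => hpL (e ▸ hq)
        simp [sp, Function.update_of_ne hqp]
      have h1 : SFDeriv ((Fm.var p).dneg :: L.map (sp u)) [D] := by
        have := h (Function.update u p true)
        simpa [sp, Function.update_self, key true] using this
      have h2 : SFDeriv ((Fm.var p).neg :: L.map (sp u)) [D] := by
        have := h (Function.update u p false)
        simpa [sp, Function.update_self, key false] using this
      exact SF.elim_fm (Fm.var p) h1 h2

/-- on the two-node frame F (root r = `false` < k = `true`), if A
is a classical tautology and A is stable in every strict finitistic valuation on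
F, then ⊢_SF A. -/
theorem classical_stable_theorem (A : Fm)
    (htaut : ∀ u : ℕ → Bool, clEval u A = true)
    (hstable : ∀ a b : ℕ → Prop,
      (∀ p, a p → b p) →
      (∀ p, (a p ∨ b p) → b p) →
      {p | a p}.Finite → {p | b p}.Finite →
      ∀ x : Bool, Force2 a b x (Fm.dneg A) → Force2 a b x A) :
    SFDeriv [] [A] := by
  have he : ∀ u : ℕ → Bool, eEval u A = true := sem_key A htaut hstable
  apply SF.elim A A.vars.toList (Finset.nodup_toList _)
  intro u
  exact (SF.truth u A.vars.toList A (fun p hp => (Finset.mem_toList).mpr hp)).2.2 (he u)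
end
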